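/- arXiv:1801.03313 — 2 statements merged into one kernel-verified Lean document; each statement's English description precedes it below -/
import Mathlib

section
/- There is no way to assign signs to the edges of the complete graph K₄ such that every one of its four triangular faces is of the form (ΩT^ε, Ω1^{−ε}, Ω1^{−ε}) with a consistent labelling of edges by move types; consequently the Reidemeister simplicial complex CG(K) contains no 3-simplices, and H_n(CG(K); ℤ) = 0 for all n ≥ 3. -/
/-- There is no labelling of the edges of `K₄` by signed Reidemeister moves
(`Ω1^±` with increment `±1`, `ΩT^±` with increment `±2`, antisymmetric with
respect to orientation) such that every triangular face consists of exactly
one `ΩT` edge and two `Ω1` edges with increments summing to zero; hence the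
Reidemeister complex contains no 3-simplices. -/
theorem no_tetrahedron_in_reidemeister_complex :
    ¬ ∃ d : Fin 4 → Fin 4 → ℤ,
      (∀ i j, d i j = - d j i) ∧
      (∀ i j, i ≠ j → |d i j| = 1 ∨ |d i j| = 2) ∧
      (∀ i j k, i ≠ j → j ≠ k → i ≠ k →
        d i j + d j k + d k i = 0 ∧
        ((|d i j| = 2 ∧ |d j k| = 1 ∧ |d k i| = 1) ∨
         (|d i j| = 1 ∧ |d j k| = 2 ∧ |d k i| = 1) ∨
         (|d i j| = 1 ∧ |d j k| = 1 ∧ |d k i| = 2))) := by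
  rintro ⟨d, ha, -, h3⟩
  have t012 := h3 0 1 2 (by decide) (by decide) (by decide)
  have t013 := h3 0 1 3 (by decide) (by decide) (by decide)
  have t023 := h3 0 2 3 (by decide) (by decide) (by decide)
  have t123 := h3 1 2 3 (by decide) (by decide) (by decide)
  rw [ha 2 0] at t012
  rw [ha 3 0] at t013
  rw [ha 3 0] at t023
  rw [ha 3 1] at t123
  simp only [abs_eq (by norm_num : (0:ℤ) ≤ 1), abs_eq (by norm_num : (0:ℤ) ≤ 2),
    abs_neg] at t012 t013 t023 t123
  omega
end

section
/- In any triangle of the Reidemeister graph of type Ω2–Ω1–Ω1 (one Ω2 move and two Ω1 moves), the two Ω1 moves have the same sign, opposite to the Ω2 move, the two crossings involved in the Ω1 moves have opposite crossing signs, and the Ω2 move is unmatched. -/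
/-- Generator `X s` of the Hass–Nowik group, modelled in `(Bool × ℤ) →₀ ℤ`. -/
noncomputable def HNX (s : ℤ) : (Bool × ℤ) →₀ ℤ := Finsupp.single (false, s) 1

/-- Generator `Y s`. -/
noncomputable def HNY (s : ℤ) : (Bool × ℤ) →₀ ℤ := Finsupp.single (true, s) 1

lemma HNX_ne_HNY (s t : ℤ) : HNX s ≠ HNY t := by
  intro h
  have := DFunLike.congr_fun h (false, s)
  simp [HNX, HNY, Finsupp.single_apply] at this

/-- In a triangle of type Ω2–Ω1–Ω1, the Hass–Nowik changes must sum to zero: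
the Ω1 contributions are `ε·u`, `ε'·u'` with `u, u' ∈ {X₀, Y₀}` and
`ε, ε' ∈ {±1}`, the Ω2 contribution is `η·w` with `η ∈ {±1}` and `w` of
matched (`X_n + Y_{n+1}`) or unmatched (`X_m + Y_m`) type.  Then necessarily
the two Ω1 moves have the same sign, opposite to the Ω2 move (`ε = ε'`,
`η = −ε`), the Ω1 crossings have opposite crossing signs (`u ≠ u'`), and the
Ω2 move is unmatched with `m = 0` (`w = X₀ + Y₀`). -/
theorem omega2_omega1_omega1_triangle_constraints
    (ε ε' η : ℤ) (hε : ε = 1 ∨ ε = -1) (hε' : ε' = 1 ∨ ε' = -1)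
    (hη : η = 1 ∨ η = -1)
    (u u' w : (Bool × ℤ) →₀ ℤ)
    (hu : u = HNX 0 ∨ u = HNY 0) (hu' : u' = HNX 0 ∨ u' = HNY 0)
    (hw : (∃ n : ℤ, w = HNX n + HNY (n + 1)) ∨ (∃ m : ℤ, w = HNX m + HNY m))
    (hsum : ε • u + ε' • u' + η • w = 0) :
    ε = ε' ∧ η = -ε ∧ u ≠ u' ∧ w = HNX 0 + HNY 0 := by
  have key : ∀ p, ε * u p + ε' * u' p + η * w p = 0 := by
    intro p
    have := DFunLike.congr_fun hsum p
    simpa using this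
  rcases hw with ⟨n, rfl⟩ | ⟨m, rfl⟩
  · -- matched type: find a point where w is supported but u, u' are not
    exfalso
    by_cases hn : n = 0
    · subst hn
      have h := key (true, 1)
      rcases hu with rfl | rfl <;> rcases hu' with rfl | rfl <;>
        simp only [HNX, HNY, Finsupp.add_apply, Finsupp.single_apply,
          Prod.mk.injEq] at h <;>
        norm_num at h <;>
        rcases hη with rfl | rfl <;> omega
    · have hn' : ¬ ((0:ℤ) = n) := fun h => hn h.symm
      have h := key (false, n)
      rcases hu with rfl | rfl <;> rcases hu' with rfl | rfl <;>
        simp only [HNX, HNY, Finsupp.add_apply, Finsupp.single_apply,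
          Prod.mk.injEq, if_neg hn'] at h <;>
        norm_num at h <;>
        rcases hη with rfl | rfl <;> omega
  · by_cases hm : m = 0
    · subst hm
      have h1 := key (false, 0)
      have h2 := key (true, 0)
      rcases hu with rfl | rfl <;> rcases hu' with rfl | rfl <;>
        simp only [HNX, HNY, Finsupp.add_apply, Finsupp.single_apply,
          Prod.mk.injEq] at h1 h2 <;>
        norm_num at h1 h2
      · exact absurd h2 (by rcases hη with rfl | rfl <;> omega)
      · exact ⟨by omega, by omega, HNX_ne_HNY 0 0, rfl⟩
      · exact ⟨by omega, by omega, Ne.symm (HNX_ne_HNY 0 0), rfl⟩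
      · exact absurd h1 (by rcases hη with rfl | rfl <;> omega)
    · exfalso
      have hm' : ¬ ((0:ℤ) = m) := fun h => hm h.symm
      have h := key (false, m)
      rcases hu with rfl | rfl <;> rcases hu' with rfl | rfl <;>
        simp only [HNX, HNY, Finsupp.add_apply, Finsupp.single_apply,
          Prod.mk.injEq, if_neg hm'] at h <;>
        norm_num at h <;>
        rcases hη with rfl | rfl <;> omega
end
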